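/- For α > 0, the scalar curvature function R_α satisfies lim_{r→0⁺} R_α(r) = 12/α²; that is, R_α tends to 12/α² as r approaches 0 from the right. -/

import Mathlib

open Real

/-- Warping function `φ_α(r) = α · arctan(r/α)`. -/
noncomputable def warp (α : ℝ) : ℝ → ℝ := fun r => α * arctan (r / α)

/-- Scalar curvature of the rotationally symmetric metric `dr² + φ_α(r)² g_{S²}`:
`R_α(r) = 2(−2φ_α''(r)/φ_α(r) + (1 − φ_α'(r)²)/φ_α(r)²)`. -/
noncomputable def scalarCurv (α : ℝ) : ℝ → ℝ := fun r =>
  2 * (-2 * deriv (deriv (warp α)) r / warp α r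
        + (1 - (deriv (warp α) r) ^ 2) / (warp α r) ^ 2)

/-!
Both `φ_α'(r) = α²/(α² + r²)` and `φ_α''` are explicit rational functions, so `R_α(r)` is a
rational expression in `r` and `q(r) = r / φ_α(r)`. Since `φ_α(0) = 0` and `φ_α'(0) = 1`,
`q(r) → 1`, and substituting `q = 1`, `r = 0` gives `2 · (4α² + 2α²) / α⁴ = 12/α²`.
-/

open Filter Topology

theorem HasDerivAt.tendsto_id_div_nhdsNE {f : ℝ → ℝ} {f' : ℝ} (hf : HasDerivAt f f' 0)
    (hf0 : f 0 = 0) (hf' : f' ≠ 0) :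
    Tendsto (fun x => x / f x) (𝓝[≠] 0) (𝓝 f'⁻¹) := by
  have hslope := hf.tendsto_slope_zero.inv₀ hf'
  simpa [hf0, div_eq_inv_mul] using hslope

section Warp

variable {α : ℝ}

theorem hasDerivAt_warp (hα : α ≠ 0) (r : ℝ) :
    HasDerivAt (warp α) (α ^ 2 / (α ^ 2 + r ^ 2)) r := by
  have h := (((hasDerivAt_id r).div_const α).arctan).const_mul α
  refine h.congr_deriv ?_
  simp only [id]
  field_simp

theorem deriv_warp (hα : α ≠ 0) : deriv (warp α) = fun r => α ^ 2 / (α ^ 2 + r ^ 2) :=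
  funext fun r => (hasDerivAt_warp hα r).deriv

theorem deriv_deriv_warp (hα : α ≠ 0) (r : ℝ) :
    deriv (deriv (warp α)) r = -2 * α ^ 2 * r / (α ^ 2 + r ^ 2) ^ 2 := by
  have hpos : 0 < α ^ 2 + r ^ 2 := by positivity
  have h := (hasDerivAt_const r (α ^ 2)).div ((hasDerivAt_pow 2 r).const_add (α ^ 2))
    hpos.ne'
  rw [deriv_warp hα]
  exact (h.congr_deriv (by norm_num; ring)).deriv

theorem warp_ne_zero (hα : α ≠ 0) {r : ℝ} (hr : r ≠ 0) : warp α r ≠ 0 :=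
  mul_ne_zero hα (arctan_eq_zero_iff.not.mpr (div_ne_zero hr hα))

theorem scalarCurv_eq (hα : α ≠ 0) {r : ℝ} (hr : r ≠ 0) :
    scalarCurv α r = 2 * (r / warp α r) * (4 * α ^ 2 + r / warp α r * (2 * α ^ 2 + r ^ 2))
      / (α ^ 2 + r ^ 2) ^ 2 := by
  have hw := warp_ne_zero hα hr
  have hpos : 0 < α ^ 2 + r ^ 2 := by positivity
  rw [scalarCurv, deriv_deriv_warp hα, deriv_warp hα]
  field_simp
  ring

theorem tendsto_id_div_warp (hα : α ≠ 0) :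
    Tendsto (fun r => r / warp α r) (𝓝[≠] 0) (𝓝 1) := by
  have h := (hasDerivAt_warp hα 0).tendsto_id_div_nhdsNE (by simp [warp]) (by simp [hα])
  simpa [hα] using h

theorem tendsto_scalarCurv_nhdsNE (hα : α ≠ 0) :
    Tendsto (scalarCurv α) (𝓝[≠] 0) (𝓝 (12 / α ^ 2)) := by
  have hq := tendsto_id_div_warp hα
  have hid : Tendsto (fun r : ℝ => r) (𝓝[≠] 0) (𝓝 0) :=
    tendsto_nhdsWithin_of_tendsto_nhds tendsto_id
  have hlim : Tendsto (fun r => 2 * (r / warp α r) * (4 * α ^ 2 + r / warp α r *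
      (2 * α ^ 2 + r ^ 2)) / (α ^ 2 + r ^ 2) ^ 2) (𝓝[≠] 0)
      (𝓝 (2 * 1 * (4 * α ^ 2 + 1 * (2 * α ^ 2 + 0 ^ 2)) / (α ^ 2 + 0 ^ 2) ^ 2)) :=
    ((tendsto_const_nhds.mul hq).mul (tendsto_const_nhds.add
      (hq.mul (tendsto_const_nhds.add (hid.pow 2))))).div
      ((tendsto_const_nhds.add (hid.pow 2)).pow 2) (by positivity)
  have hval : 2 * 1 * (4 * α ^ 2 + 1 * (2 * α ^ 2 + 0 ^ 2)) / (α ^ 2 + 0 ^ 2) ^ 2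
      = 12 / α ^ 2 := by
    field_simp
    ring
  rw [hval] at hlim
  exact hlim.congr' (eventually_nhdsWithin_of_forall fun r hr => (scalarCurv_eq hα hr).symm)

end Warp

open Filter Topology in
/-- `R_α(r) → 12/α²` as `r → 0⁺`. -/
theorem stmt_3 (α : ℝ) (hα : 0 < α) :
    Filter.Tendsto (scalarCurv α) (nhdsWithin 0 (Set.Ioi 0)) (nhds (12 / α ^ 2)) :=
  (tendsto_scalarCurv_nhdsNE hα.ne').mono_left (nhdsGT_le_nhdsNE 0)
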